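/- Let $n \ge 2$ be a natural number, $k \le 0$ and $\mu > 0$ real numbers, and $R > 0$. Suppose $F : \mathbb{R} \to \mathbb{R}$ is twice differentiable on $(0,R)$ and satisfies on $(0,R)$ the ordinary differential equation $F''(r) + (n-1)\dfrac{\sin_k'(r)}{\sin_k(r)} F'(r) - \dfrac{n-1}{\sin_k(r)^2} F(r) + \mu F(r) = 0$, together with $F(r) \ge 0$ and $F'(r) \ge 0$ for all $r \in (0,R)$. Then the function $G(r) = F'(r)^2 + \dfrac{n-1}{\sin_k(r)^2} F(r)^2$ is monotone nonincreasing on $(0,R)$. -/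

import Mathlib

open Real MeasureTheory Set Filter

/-- The generalized sine function `sin_m`. -/
noncomputable def sinm (m r : ℝ) : ℝ :=
  if 0 < m then Real.sin (Real.sqrt m * r) / Real.sqrt m
  else if m = 0 then r
  else Real.sinh (Real.sqrt (-m) * r) / Real.sqrt (-m)

/-- The derivative `sin_m'` of the generalized sine function. -/
noncomputable def sinm' (m r : ℝ) : ℝ :=
  if 0 < m then Real.cos (Real.sqrt m * r)
  else if m = 0 then 1
  else Real.cosh (Real.sqrt (-m) * r)

/-!
Write `s = sin_k`, `c = n - 1` and `G = F'² + c F² / s²`. Eliminating `F''` with the equation,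
`G' = 4c F F' / s² - 2c (s'/s) F'² - 2c (s'/s³) F² - 2μ F F'`.
For `k ≤ 0` we have `s > 0` and `s' ≥ 1`; lowering `s'` to `1` can only increase `G'`, and at
`s' = 1` the first three terms combine to `-2c (s F' - F)² / s³`. Hence `G' ≤ -2μ F F' ≤ 0`.
-/

theorem hasDerivAt_sinm (m r : ℝ) : HasDerivAt (sinm m) (sinm' m r) r := by
  rcases lt_trichotomy m 0 with hm | rfl | hm
  · have ha : Real.sqrt (-m) ≠ 0 := (Real.sqrt_pos.mpr (neg_pos.mpr hm)).ne'
    have hsinm : sinm m = fun x => Real.sinh (Real.sqrt (-m) * x) / Real.sqrt (-m) := by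
      funext x; simp [sinm, hm.not_gt, hm.ne]
    have hsinm' : sinm' m r = Real.cosh (Real.sqrt (-m) * r) := by
      simp [sinm', hm.not_gt, hm.ne]
    rw [hsinm, hsinm']
    simpa [ha] using
      (((hasDerivAt_id r).const_mul (Real.sqrt (-m))).sinh).div_const (Real.sqrt (-m))
  · have : sinm 0 = id := by funext x; simp [sinm]
    simp [this, sinm', hasDerivAt_id]
  · have ha : Real.sqrt m ≠ 0 := (Real.sqrt_pos.mpr hm).ne'
    have hsinm : sinm m = fun x => Real.sin (Real.sqrt m * x) / Real.sqrt m := by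
      funext x; simp [sinm, hm]
    have hsinm' : sinm' m r = Real.cos (Real.sqrt m * r) := by simp [sinm', hm]
    rw [hsinm, hsinm']
    simpa [ha] using
      (((hasDerivAt_id r).const_mul (Real.sqrt m)).sin).div_const (Real.sqrt m)

theorem sinm_pos {m : ℝ} (hm : m ≤ 0) {r : ℝ} (hr : 0 < r) : 0 < sinm m r := by
  rcases hm.lt_or_eq with hm | rfl
  · have ha : 0 < Real.sqrt (-m) := Real.sqrt_pos.mpr (neg_pos.mpr hm)
    have : 0 < Real.sinh (Real.sqrt (-m) * r) := Real.sinh_pos_iff.mpr (by positivity)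
    simp only [sinm, hm.not_gt, hm.ne, if_false]
    positivity
  · simp [sinm, hr]

theorem one_le_sinm' {m : ℝ} (hm : m ≤ 0) (r : ℝ) : 1 ≤ sinm' m r := by
  rcases hm.lt_or_eq with hm | rfl
  · simp [sinm', hm.not_gt, hm.ne, Real.one_le_cosh]
  · simp [sinm']

theorem HasDerivAt.sq_add_div_sq_mul_sq {f g s : ℝ → ℝ} {f' g' s' r : ℝ} (c : ℝ)
    (hf : HasDerivAt f f' r) (hg : HasDerivAt g g' r) (hs : HasDerivAt s s' r) (hs0 : s r ≠ 0) :
    HasDerivAt (fun x => g x ^ 2 + c / s x ^ 2 * f x ^ 2)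
      (2 * g r * g' - 2 * c * s' / s r ^ 3 * f r ^ 2 + 2 * c / s r ^ 2 * f r * f') r := by
  refine ((hg.fun_pow 2).fun_add (((hasDerivAt_const r c).fun_div (hs.fun_pow 2)
    (pow_ne_zero 2 hs0)).fun_mul (hf.fun_pow 2))).congr_deriv ?_
  field_simp
  ring

theorem energy_deriv_nonpos {c μ s s' f g : ℝ} (hc : 0 ≤ c) (hμ : 0 ≤ μ) (hs : 0 < s)
    (hs' : 1 ≤ s') (hf : 0 ≤ f) (hg : 0 ≤ g) :
    2 * g * (c / s ^ 2 * f - c * (s' / s) * g - μ * f) - 2 * c * s' / s ^ 3 * f ^ 2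
      + 2 * c / s ^ 2 * f * g ≤ 0 := by
  have key : 2 * g * (c / s ^ 2 * f - c * (s' / s) * g - μ * f) - 2 * c * s' / s ^ 3 * f ^ 2
      + 2 * c / s ^ 2 * f * g
      = -(2 * c / s ^ 3) * ((s * g - f) ^ 2 + (s' - 1) * (s ^ 2 * g ^ 2 + f ^ 2))
        - 2 * μ * f * g := by
    field_simp
    ring
  rw [key]
  have hs'1 : 0 ≤ s' - 1 := by linarith
  have hsq : 0 ≤ 2 * c / s ^ 3 * ((s * g - f) ^ 2 + (s' - 1) * (s ^ 2 * g ^ 2 + f ^ 2)) := by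
    positivity
  have hμfg : 0 ≤ μ * f * g := by positivity
  linarith

theorem energy_antitone_general (n : ℕ) (hn : 2 ≤ n) (k : ℝ) (hk : k ≤ 0)
    (μ : ℝ) (hμ : 0 < μ) (R : ℝ) (F F' F'' : ℝ → ℝ)
    (hF' : ∀ r ∈ Set.Ioo (0:ℝ) R, HasDerivAt F (F' r) r)
    (hF'' : ∀ r ∈ Set.Ioo (0:ℝ) R, HasDerivAt F' (F'' r) r)
    (hode : ∀ r ∈ Set.Ioo (0:ℝ) R,
      F'' r + ((n : ℝ) - 1) * (sinm' k r / sinm k r) * F' r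
        - ((n : ℝ) - 1) / (sinm k r) ^ 2 * F r + μ * F r = 0)
    (hFnonneg : ∀ r ∈ Set.Ioo (0:ℝ) R, 0 ≤ F r)
    (hF'nonneg : ∀ r ∈ Set.Ioo (0:ℝ) R, 0 ≤ F' r) :
    AntitoneOn (fun r => (F' r) ^ 2 + ((n : ℝ) - 1) / (sinm k r) ^ 2 * (F r) ^ 2)
      (Set.Ioo 0 R) := by
  have hc : (0 : ℝ) ≤ n - 1 := by
    have : (2 : ℝ) ≤ n := by exact_mod_cast hn
    linarith
  have hG : ∀ r ∈ Ioo (0 : ℝ) R, HasDerivAt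
      (fun r => F' r ^ 2 + ((n : ℝ) - 1) / sinm k r ^ 2 * F r ^ 2)
      (2 * F' r * F'' r - 2 * ((n : ℝ) - 1) * sinm' k r / sinm k r ^ 3 * F r ^ 2
        + 2 * ((n : ℝ) - 1) / sinm k r ^ 2 * F r * F' r) r := fun r hr =>
    (hF' r hr).sq_add_div_sq_mul_sq _ (hF'' r hr) (hasDerivAt_sinm k r) (sinm_pos hk hr.1).ne'
  apply antitoneOn_of_hasDerivWithinAt_nonpos (convex_Ioo 0 R)
    (fun r hr => (hG r hr).continuousAt.continuousWithinAt)
  · rw [interior_Ioo]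
    exact fun r hr => (hG r hr).hasDerivWithinAt
  · rw [interior_Ioo]
    intro r hr
    have hF''_eq : F'' r = ((n : ℝ) - 1) / sinm k r ^ 2 * F r
        - ((n : ℝ) - 1) * (sinm' k r / sinm k r) * F' r - μ * F r := by
      linarith [hode r hr]
    rw [hF''_eq]
    exact energy_deriv_nonpos hc hμ.le (sinm_pos hk hr.1) (one_le_sinm' hk r)
      (hFnonneg r hr) (hF'nonneg r hr)

/-- If `F` solves the radial Neumann eigenvalue equation on `(0,R)` for `k ≤ 0`
with `F ≥ 0` and `F' ≥ 0`, then `G(r) = F'(r)² + (n-1)/sin_k(r)² F(r)²` is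
monotone nonincreasing on `(0,R)`. -/
theorem energy_antitone (n : ℕ) (hn : 2 ≤ n) (k : ℝ) (hk : k ≤ 0)
    (μ : ℝ) (hμ : 0 < μ) (R : ℝ) (hR : 0 < R) (F F' F'' : ℝ → ℝ)
    (hF' : ∀ r ∈ Set.Ioo (0:ℝ) R, HasDerivAt F (F' r) r)
    (hF'' : ∀ r ∈ Set.Ioo (0:ℝ) R, HasDerivAt F' (F'' r) r)
    (hode : ∀ r ∈ Set.Ioo (0:ℝ) R,
      F'' r + ((n : ℝ) - 1) * (sinm' k r / sinm k r) * F' r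
        - ((n : ℝ) - 1) / (sinm k r) ^ 2 * F r + μ * F r = 0)
    (hFnonneg : ∀ r ∈ Set.Ioo (0:ℝ) R, 0 ≤ F r)
    (hF'nonneg : ∀ r ∈ Set.Ioo (0:ℝ) R, 0 ≤ F' r) :
    AntitoneOn (fun r => (F' r) ^ 2 + ((n : ℝ) - 1) / (sinm k r) ^ 2 * (F r) ^ 2)
      (Set.Ioo 0 R) :=
  energy_antitone_general n hn k hk μ hμ R F F' F'' hF' hF'' hode hFnonneg hF'nonneg
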